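/- For p > 1, the quantity π_p defined by the integral 2∫₀^{(p-1)^{1/p}} dt/(1 - t^p/(p-1))^{1/p} equals 2π(p-1)^{1/p}/(p sin(π/p)). -/

import Mathlib

/-!
Scaling `t = (p - 1)^(1/p) u` turns `π_p / 2` into `(p - 1)^(1/p) ∫₀¹ (1 - u^p)^(-1/p) du`, and the
substitution `x = u^p` turns the latter integral into `(1/p) B(1/p, 1 - 1/p)`. Euler's reflection
formula `Γ(s) Γ(1 - s) = π / sin (π s)` evaluates this Beta value.
-/

open Real intervalIntegral MeasureTheory Set

theorem integral_rpow_mul_one_sub_rpow {a b : ℝ} (ha : 0 < a) (hb : 0 < b) :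
    ∫ x in (0:ℝ)..1, x ^ (a - 1) * (1 - x) ^ (b - 1) = Gamma a * Gamma b / Gamma (a + b) := by
  have hcast : ((∫ x in (0:ℝ)..1, x ^ (a - 1) * (1 - x) ^ (b - 1) : ℝ) : ℂ)
      = Complex.betaIntegral a b := by
    rw [Complex.betaIntegral, ← intervalIntegral.integral_ofReal]
    refine integral_congr fun x hx => ?_
    rw [uIcc_of_le zero_le_one] at hx
    push_cast
    rw [Complex.ofReal_cpow hx.1, Complex.ofReal_cpow (sub_nonneg.2 hx.2)]
    push_cast
    rfl
  rw [Complex.betaIntegral_eq_Gamma_mul_div _ _ (by simpa) (by simpa), ← Complex.ofReal_add,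
    Complex.Gamma_ofReal, Complex.Gamma_ofReal, Complex.Gamma_ofReal] at hcast
  exact_mod_cast hcast

theorem integral_rpow_mul_one_sub_rpow_neg {s : ℝ} (hs0 : 0 < s) (hs1 : s < 1) :
    ∫ x in (0:ℝ)..1, x ^ (s - 1) * (1 - x) ^ (-s) = π / sin (π * s) := by
  have h := integral_rpow_mul_one_sub_rpow hs0 (sub_pos.2 hs1)
  rwa [sub_sub_cancel_left, add_sub_cancel, Gamma_one, div_one, Gamma_mul_Gamma_one_sub] at h

theorem rpow_image_Ioo_zero_one {p : ℝ} (hp : 0 < p) :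
    (fun u : ℝ => u ^ p) '' Ioo 0 1 = Ioo 0 1 := by
  ext x
  constructor
  · rintro ⟨u, ⟨hu0, hu1⟩, rfl⟩
    exact ⟨rpow_pos_of_pos hu0 p, rpow_lt_one hu0.le hu1 hp⟩
  · rintro ⟨hx0, hx1⟩
    refine ⟨x ^ p⁻¹, ⟨rpow_pos_of_pos hx0 _, rpow_lt_one hx0.le hx1 (inv_pos.2 hp)⟩, ?_⟩
    exact rpow_inv_rpow hx0.le hp.ne'

/-- Holds even when `g` is not integrable: the Jacobian formula on `Ioo 0 1` makes both sides
integrable together, so both are junk `0` together. -/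
theorem integral_comp_rpow_unitInterval {E : Type*} [NormedAddCommGroup E] [NormedSpace ℝ E]
    (g : ℝ → E) {p : ℝ} (hp : 0 < p) :
    ∫ u in (0:ℝ)..1, (p * u ^ (p - 1)) • g (u ^ p) = ∫ x in (0:ℝ)..1, g x := by
  have h := integral_image_eq_integral_abs_deriv_smul (measurableSet_Ioo (a := (0:ℝ)) (b := 1))
    (fun u hu => (hasDerivAt_rpow_const (Or.inl hu.1.ne')).hasDerivWithinAt)
    ((strictMonoOn_rpow_Ici_of_exponent_pos hp).injOn.mono fun u hu => hu.1.le) g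
  rw [rpow_image_Ioo_zero_one hp] at h
  rw [integral_of_le zero_le_one, integral_of_le zero_le_one, integral_Ioc_eq_integral_Ioo,
    integral_Ioc_eq_integral_Ioo, h]
  refine setIntegral_congr_fun measurableSet_Ioo fun u hu => ?_
  rw [abs_of_pos (by have := hu.1; positivity)]

theorem integral_one_sub_rpow_rpow_neg_one_div {p : ℝ} (hp : 1 < p) :
    ∫ u in (0:ℝ)..1, (1 - u ^ p) ^ (-(1 / p)) = π / (p * sin (π / p)) := by
  have hp0 : 0 < p := one_pos.trans hp
  have hsubst := integral_comp_rpow_unitInterval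
    (fun x => x ^ (1 / p - 1) * (1 - x) ^ (-(1 / p))) hp0
  rw [integral_rpow_mul_one_sub_rpow_neg (by positivity) ((div_lt_one hp0).2 hp),
    mul_one_div] at hsubst
  rw [mul_comm p, ← div_div, ← hsubst, ← intervalIntegral.integral_div]
  refine integral_congr_ae (ae_of_all _ fun u hu => ?_)
  rw [uIoc_of_le zero_le_one] at hu
  have hcancel : u ^ (p - 1) * (u ^ p) ^ (1 / p - 1) = 1 := by
    rw [← rpow_mul hu.1.le, ← rpow_add hu.1, mul_sub, mul_one_div_cancel hp0.ne']
    simp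
  rw [smul_eq_mul, ← mul_assoc, mul_assoc p, hcancel, mul_one, mul_div_cancel_left₀ _ hp0.ne']

theorem integral_one_sub_rpow_div_rpow {p c : ℝ} (q : ℝ) (hc : 0 < c) :
    ∫ t in (0:ℝ)..c, (1 - t ^ p / c ^ p) ^ q = c * ∫ u in (0:ℝ)..1, (1 - u ^ p) ^ q := by
  calc ∫ t in (0:ℝ)..c, (1 - t ^ p / c ^ p) ^ q = ∫ t in (0:ℝ)..c, (1 - (t / c) ^ p) ^ q := by
        refine integral_congr fun t ht => ?_
        rw [uIcc_of_le hc.le] at ht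
        simp only [div_rpow ht.1 hc.le]
    _ = c * ∫ u in (0:ℝ)..1, (1 - u ^ p) ^ q := by
        rw [integral_comp_div (fun u => (1 - u ^ p) ^ q) hc.ne', zero_div, div_self hc.ne',
          smul_eq_mul]

theorem pi_p_formula (p : ℝ) (hp : 1 < p) :
    2 * ∫ t in (0:ℝ)..((p - 1) ^ (1/p)), (1 - t ^ p / (p - 1)) ^ (-(1/p)) =
      2 * Real.pi * (p - 1) ^ (1/p) / (p * Real.sin (Real.pi / p)) := by
  have hc : 0 < (p - 1) ^ (1/p) := rpow_pos_of_pos (sub_pos.2 hp) _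
  have hcp : ((p - 1) ^ (1/p)) ^ p = p - 1 := by
    rw [one_div, rpow_inv_rpow (sub_pos.2 hp).le (one_pos.trans hp).ne']
  have hscale := integral_one_sub_rpow_div_rpow (p := p) (-(1/p)) hc
  rw [hcp, integral_one_sub_rpow_rpow_neg_one_div hp] at hscale
  rw [hscale]
  ring
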